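/- arXiv:1910.03537 — 3 statements merged into one kernel-verified Lean document; each statement's English description precedes it below -/
import Mathlib

section
/- Let n ≥ 1 and let M be an n × n complex positive semidefinite matrix. Then M ∘ conj(M) ≥ (1/n) · d_M d_M* in the Loewner order, where conj(M) is the entrywise complex conjugate of M and d_M = (m_{11}, …, m_{nn})ᵀ is the vector of diagonal entries of M. -/
/-!
Factor `M = Bᴴ * B` and, for a test vector `x`, put `Y = B * diagonal x * Bᴴ`. Then the quadratic
form of `M ∘ conj M = M ∘ Mᵀ` at `x` is the squared Frobenius norm `trace (Yᴴ * Y)`, while that of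
`d_M d_M*` is `|trace Y|²`. The inequality `|trace Y|² ≤ n · trace (Yᴴ * Y)` holds because the
difference is `n` times the squared Frobenius norm of the trace-free part `Y - (trace Y / n) • 1`.
-/

open Matrix ComplexOrder

namespace Matrix

section CommSemiring

variable {ι α : Type*} [CommSemiring α]

lemma IsHermitian.map_star_eq_transpose [StarRing α] {M : Matrix ι ι α} (hM : M.IsHermitian) :
    M.map (starRingEnd α) = Mᵀ := by
  ext i j
  exact hM.apply j i

variable [Fintype ι]

lemma dotProduct_hadamard_transpose_mulVec [DecidableEq ι] (A B : Matrix ι ι α) (v w : ι → α) :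
    v ⬝ᵥ (A ⊙ Bᵀ) *ᵥ w = trace (diagonal v * A * diagonal w * B) := by
  rw [dotProduct_mulVec, dotProduct_vecMul_hadamard, transpose_mul, transpose_transpose,
    diagonal_transpose, Matrix.mul_assoc _ (diagonal w)]

lemma dotProduct_vecMulVec_mulVec (a b v w : ι → α) :
    v ⬝ᵥ vecMulVec a b *ᵥ w = (v ⬝ᵥ a) * (b ⬝ᵥ w) := by
  rw [vecMulVec_mulVec, dotProduct_smul, MulOpposite.smul_eq_mul_unop, MulOpposite.unop_op]

lemma trace_mul_diagonal [DecidableEq ι] (A : Matrix ι ι α) (v : ι → α) :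
    trace (A * diagonal v) = A.diag ⬝ᵥ v := by
  simp [trace, dotProduct]

end CommSemiring

variable {ι κ 𝕜 : Type*} [Fintype ι] [Fintype κ] [RCLike 𝕜]

lemma inv_card_mul_star_trace_mul_trace_le (Y : Matrix ι ι 𝕜) :
    (Fintype.card ι : 𝕜)⁻¹ * (star (trace Y) * trace Y) ≤ trace (Yᴴ * Y) := by
  classical
  rcases isEmpty_or_nonempty ι with hι | hι
  · simp
  have hn : (Fintype.card ι : 𝕜) ≠ 0 := by simp [Fintype.card_ne_zero]
  set c : 𝕜 := (Fintype.card ι : 𝕜)⁻¹ * trace Y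
  have hc : star c = (Fintype.card ι : 𝕜)⁻¹ * star (trace Y) := by simp [c]
  have h : trace ((Y - c • 1)ᴴ * (Y - c • 1)) =
      trace (Yᴴ * Y) - (Fintype.card ι : 𝕜)⁻¹ * (star (trace Y) * trace Y) := by
    simp only [conjTranspose_sub, conjTranspose_smul, conjTranspose_one, sub_mul, mul_sub,
      Matrix.smul_mul, Matrix.mul_smul, Matrix.one_mul, Matrix.mul_one, trace_sub, trace_smul,
      trace_one, trace_conjTranspose, smul_eq_mul, hc]
    simp only [c]
    field_simp
    ring
  have := (posSemidef_conjTranspose_mul_self (Y - c • 1)).trace_nonneg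
  rwa [h, sub_nonneg] at this

open scoped MatrixOrder in
lemma PosSemidef.exists_eq_conjTranspose_mul_self {M : Matrix ι ι 𝕜} (hM : M.PosSemidef) :
    ∃ B : Matrix ι ι 𝕜, M = Bᴴ * B := by
  classical
  exact CStarAlgebra.nonneg_iff_eq_star_mul_self.mp hM.nonneg

variable [DecidableEq ι]

lemma star_dotProduct_hadamard_transpose_mulVec_conjTranspose_mul_self
    (B : Matrix κ ι 𝕜) (x : ι → 𝕜) :
    star x ⬝ᵥ ((Bᴴ * B) ⊙ (Bᴴ * B)ᵀ) *ᵥ x =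
      trace ((B * diagonal x * Bᴴ)ᴴ * (B * diagonal x * Bᴴ)) := by
  rw [dotProduct_hadamard_transpose_mulVec, conjTranspose_mul, conjTranspose_mul,
    conjTranspose_conjTranspose, diagonal_conjTranspose, Matrix.mul_assoc B, trace_mul_comm B]
  simp only [Matrix.mul_assoc]

lemma star_dotProduct_vecMulVec_diag_mulVec_conjTranspose_mul_self
    (B : Matrix κ ι 𝕜) (x : ι → 𝕜) :
    star x ⬝ᵥ vecMulVec (Bᴴ * B).diag (star (Bᴴ * B).diag) *ᵥ x =
      star (trace (B * diagonal x * Bᴴ)) * trace (B * diagonal x * Bᴴ) := by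
  have hdiag : star (Bᴴ * B).diag = (Bᴴ * B).diag := by
    rw [← diag_conjTranspose, conjTranspose_mul, conjTranspose_conjTranspose]
  have htrace : trace (B * diagonal x * Bᴴ) = (Bᴴ * B).diag ⬝ᵥ x := by
    rw [trace_mul_cycle, trace_mul_diagonal]
  rw [dotProduct_vecMulVec_mulVec, star_dotProduct, hdiag, htrace]

end Matrix

theorem psd_schur_conj_lower_bound_diag_general
    (n : ℕ) (M : Matrix (Fin n) (Fin n) ℂ)
    (hM : M.PosSemidef) :
    (M.hadamard (M.map (starRingEnd ℂ)) -
      ((n : ℂ))⁻¹ • vecMulVec M.diag (star M.diag)).PosSemidef := by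
  rw [hM.isHermitian.map_star_eq_transpose]
  refine .of_dotProduct_mulVec_nonneg ?_ fun x => ?_
  · exact (hM.isHermitian.hadamard hM.transpose.isHermitian).sub
      ((posSemidef_vecMulVec_self_star _).isHermitian.smul (IsSelfAdjoint.natCast n).inv₀)
  obtain ⟨B, rfl⟩ := hM.exists_eq_conjTranspose_mul_self
  rw [sub_mulVec, dotProduct_sub, smul_mulVec, dotProduct_smul, smul_eq_mul, sub_nonneg,
    star_dotProduct_hadamard_transpose_mulVec_conjTranspose_mul_self,
    star_dotProduct_vecMulVec_diag_mulVec_conjTranspose_mul_self]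
  simpa only [Fintype.card_fin] using inv_card_mul_star_trace_mul_trace_le (B * diagonal x * Bᴴ)

theorem psd_schur_conj_lower_bound_diag
    (n : ℕ) (hn : 1 ≤ n) (M : Matrix (Fin n) (Fin n) ℂ)
    (hM : M.PosSemidef) :
    (M.hadamard (M.map (starRingEnd ℂ)) -
      ((n : ℂ))⁻¹ • vecMulVec M.diag (star M.diag)).PosSemidef :=
  psd_schur_conj_lower_bound_diag_general n M hM
end

section
/- Let n ≥ 1 and let A, B ∈ ℂ^{n×n} be nonzero matrices. Then A A* ∘ B B* ≥ (1 / max(rank(A A*), rank(B B*))) · d_{A Bᵀ} d_{A Bᵀ}* in the Loewner order, where d_{A Bᵀ} is the vector of diagonal entries of A Bᵀ. -/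
/-!
Fix `x` and put `D = Aᵀ diag(x̄) B`. The Hadamard product of the Gram matrices `A A*` and `B B*`
is the Gram matrix of the face-splitting product of `A` and `B` (rows `aⱼ ⊗ bⱼ`), which gives
`x* (A A* ∘ B B*) x = ‖D‖_F²`, while `x* d_{A Bᵀ} = tr D`. The columns of `D` lie in a space of
dimension `rank D ≤ rank A = rank (A A*)`; expanding them in an orthonormal basis of that space
and applying Cauchy–Schwarz gives `|tr D|² ≤ rank D · ‖D‖_F²`.
-/

open Matrix ComplexOrder

open scoped InnerProductSpace

theorem norm_sum_mul_sq_le {ι R : Type*} [SeminormedRing R] (s : Finset ι) (f g : ι → R) :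
    ‖∑ i ∈ s, f i * g i‖ ^ 2 ≤ (∑ i ∈ s, ‖f i‖ ^ 2) * ∑ i ∈ s, ‖g i‖ ^ 2 :=
  calc ‖∑ i ∈ s, f i * g i‖ ^ 2 ≤ (∑ i ∈ s, ‖f i‖ * ‖g i‖) ^ 2 := by
        gcongr
        exact (norm_sum_le _ _).trans (Finset.sum_le_sum fun i _ => norm_mul_le _ _)
    _ ≤ _ := Finset.sum_mul_sq_le_sq_mul_sq _ _ _

theorem OrthonormalBasis.norm_sum_inner_sq_le_finrank_mul {ι 𝕜 E : Type*} [Fintype ι] [RCLike 𝕜]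
    [NormedAddCommGroup E] [InnerProductSpace 𝕜 E] (e : OrthonormalBasis ι 𝕜 E)
    {S : Submodule 𝕜 E} {c : ι → E} (hc : ∀ k, c k ∈ S) :
    ‖∑ k, ⟪e k, c k⟫_𝕜‖ ^ 2 ≤ Module.finrank 𝕜 S * ∑ k, ‖c k‖ ^ 2 := by
  have : FiniteDimensional 𝕜 E := .of_basis e.toBasis
  let b := stdOrthonormalBasis 𝕜 S
  have expand (k : ι) : ⟪e k, c k⟫_𝕜 = ∑ i, ⟪e k, (b i : E)⟫_𝕜 * ⟪(b i : E), c k⟫_𝕜 := by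
    have hck : ∑ i, ⟪(b i : E), c k⟫_𝕜 • (b i : E) = c k := by
      simpa using congrArg Subtype.val (b.sum_repr' ⟨c k, hc k⟩)
    conv_lhs => rw [← hck]
    simp only [inner_sum, inner_smul_right, mul_comm]
  have parseval_e (i) : ∑ k, ‖⟪e k, (b i : E)⟫_𝕜‖ ^ 2 = 1 := by
    rw [e.sum_sq_norm_inner_right]
    exact congrArg (· ^ 2) (b.orthonormal.1 i) |>.trans (one_pow 2)
  have parseval_b (k) : ∑ i, ‖⟪(b i : E), c k⟫_𝕜‖ ^ 2 = ‖c k‖ ^ 2 :=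
    b.sum_sq_norm_inner_right ⟨c k, hc k⟩
  calc ‖∑ k, ⟪e k, c k⟫_𝕜‖ ^ 2
      = ‖∑ p : ι × Fin _, ⟪e p.1, (b p.2 : E)⟫_𝕜 * ⟪(b p.2 : E), c p.1⟫_𝕜‖ ^ 2 := by
        simp only [expand, Fintype.sum_prod_type]
    _ ≤ (∑ p : ι × Fin _, ‖⟪e p.1, (b p.2 : E)⟫_𝕜‖ ^ 2) *
          ∑ p : ι × Fin _, ‖⟪(b p.2 : E), c p.1⟫_𝕜‖ ^ 2 := norm_sum_mul_sq_le _ _ _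
    _ = Module.finrank 𝕜 S * ∑ k, ‖c k‖ ^ 2 := by
        rw [Fintype.sum_prod_type_right, Fintype.sum_prod_type]
        simp [parseval_e, parseval_b]

namespace Matrix

variable {n k l R 𝕜 : Type*} [CommSemiring R] [RCLike 𝕜]

theorem norm_trace_sq_le_rank_mul [Fintype n] [DecidableEq n] (C : Matrix n n 𝕜) :
    ‖C.trace‖ ^ 2 ≤ C.rank * ∑ i, ∑ j, ‖C i j‖ ^ 2 := by
  let e := EuclideanSpace.basisFun n 𝕜
  have hrank : C.rank = Module.finrank 𝕜 (LinearMap.range (toLpLin 2 2 C)) :=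
    C.rank_eq_finrank_range_toLin e.toBasis e.toBasis
  have hbound := e.norm_sum_inner_sq_le_finrank_mul (c := fun k => toLpLin 2 2 C (e k))
    fun k => LinearMap.mem_range_self _ _
  rw [← hrank] at hbound
  convert hbound using 2
  · simp [trace, e, EuclideanSpace.inner_single_left]
  · rw [Finset.sum_comm]
    simp [EuclideanSpace.norm_sq_eq, e]

theorem transpose_mul_diagonal_mul_apply [Fintype n] [DecidableEq n] (A : Matrix n k R)
    (y : n → R) (B : Matrix n l R) (i : k) (j : l) :
    (Aᵀ * diagonal y * B) i j = ∑ a, A a i * y a * B a j := by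
  rw [mul_apply]
  simp only [mul_diagonal, transpose_apply]

theorem dotProduct_diag_mul_transpose [Fintype n] [Fintype k] [DecidableEq n]
    (A B : Matrix n k R) (y : n → R) : y ⬝ᵥ (A * Bᵀ).diag = (Aᵀ * diagonal y * B).trace := by
  simp only [dotProduct, trace, diag_apply, transpose_mul_diagonal_mul_apply]
  simp only [mul_apply, transpose_apply, Finset.mul_sum]
  rw [Finset.sum_comm]
  exact Finset.sum_congr rfl fun _ _ => Finset.sum_congr rfl fun _ _ => by ring

def faceSplit (A : Matrix n k R) (B : Matrix n l R) : Matrix n (k × l) R :=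
  of fun j p => A j p.1 * B j p.2

theorem vecMul_faceSplit [Fintype n] [DecidableEq n] (A : Matrix n k R) (B : Matrix n l R)
    (y : n → R) (i : k) (j : l) : (y ᵥ* faceSplit A B) (i, j) = (Aᵀ * diagonal y * B) i j := by
  simp only [vecMul, dotProduct, faceSplit, of_apply, transpose_mul_diagonal_mul_apply]
  exact Finset.sum_congr rfl fun _ _ => by ring

theorem hadamard_mul_conjTranspose_self [Fintype k] [Fintype l] (A : Matrix n k 𝕜)
    (B : Matrix n l 𝕜) : (A * Aᴴ) ⊙ (B * Bᴴ) = faceSplit A B * (faceSplit A B)ᴴ := by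
  ext i j
  simp only [hadamard_apply, mul_apply, conjTranspose_apply, faceSplit, of_apply,
    Fintype.sum_prod_type, Finset.sum_mul_sum, star_mul']
  exact Finset.sum_congr rfl fun _ _ => Finset.sum_congr rfl fun _ _ => by ring

theorem star_dotProduct_mul_conjTranspose_self_mulVec [Fintype n] [Fintype k]
    (C : Matrix n k 𝕜) (x : n → 𝕜) :
    star x ⬝ᵥ (C * Cᴴ) *ᵥ x = (∑ p, ‖(star x ᵥ* C) p‖ ^ 2 : ℝ) := by
  have : Cᴴ *ᵥ x = star (star x ᵥ* C) := by rw [star_vecMul, star_star]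
  rw [← mulVec_mulVec, dotProduct_mulVec, this]
  simp [dotProduct, RCLike.mul_conj]

theorem star_dotProduct_hadamard_mulVec [Fintype n] [Fintype k] [Fintype l] [DecidableEq n]
    (A : Matrix n k 𝕜) (B : Matrix n l 𝕜) (x : n → 𝕜) :
    star x ⬝ᵥ ((A * Aᴴ) ⊙ (B * Bᴴ)) *ᵥ x =
      (∑ i, ∑ j, ‖(Aᵀ * diagonal (star x) * B) i j‖ ^ 2 : ℝ) := by
  rw [hadamard_mul_conjTranspose_self, star_dotProduct_mul_conjTranspose_self_mulVec,
    Fintype.sum_prod_type]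
  simp only [vecMul_faceSplit]

theorem star_dotProduct_vecMulVec_star_mulVec [Fintype n] (v x : n → 𝕜) :
    star x ⬝ᵥ vecMulVec v (star v) *ᵥ x = (‖star x ⬝ᵥ v‖ ^ 2 : ℝ) := by
  rw [vecMulVec_mulVec, op_smul_eq_smul, dotProduct_smul, smul_eq_mul, star_dotProduct,
    RCLike.ofReal_pow, ← RCLike.mul_conj, mul_comm]
  rfl

end Matrix

theorem schur_product_lower_bound_max_rank_general
    (n : ℕ)
    (A B : Matrix (Fin n) (Fin n) ℂ) :
    ((A * Aᴴ).hadamard (B * Bᴴ) -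
      ((max (A * Aᴴ).rank (B * Bᴴ).rank : ℕ) : ℂ)⁻¹ •
        vecMulVec (A * Bᵀ).diag (star (A * Bᵀ).diag)).PosSemidef := by
  set r := max (A * Aᴴ).rank (B * Bᴴ).rank
  have hr : (0 : ℂ) ≤ (r : ℂ)⁻¹ := by positivity
  refine .of_dotProduct_mulVec_nonneg (((isHermitian_mul_conjTranspose_self A).hadamard
    (isHermitian_mul_conjTranspose_self B)).sub
      ((posSemidef_vecMulVec_self_star (A * Bᵀ).diag).smul hr).isHermitian) fun x => ?_
  set D := Aᵀ * diagonal (star x) * B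
  have hrank : D.rank ≤ r :=
    calc D.rank ≤ Aᵀ.rank := (rank_mul_le_left _ _).trans (rank_mul_le_left _ _)
      _ = (A * Aᴴ).rank := by rw [rank_transpose, rank_self_mul_conjTranspose]
      _ ≤ r := le_max_left _ _
  have key : ‖D.trace‖ ^ 2 ≤ r * ∑ i, ∑ j, ‖D i j‖ ^ 2 :=
    D.norm_trace_sq_le_rank_mul.trans (by gcongr)
  rw [sub_mulVec, dotProduct_sub, smul_mulVec, dotProduct_smul, star_dotProduct_hadamard_mulVec,
    star_dotProduct_vecMulVec_star_mulVec, dotProduct_diag_mul_transpose, smul_eq_mul,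
    ← RCLike.ofReal_natCast, ← RCLike.ofReal_inv, ← RCLike.ofReal_mul, ← RCLike.ofReal_sub]
  exact Complex.zero_le_real.mpr
    (sub_nonneg.mpr (inv_mul_le_of_le_mul₀ (Nat.cast_nonneg r) (by positivity) key))

theorem schur_product_lower_bound_max_rank
    (n : ℕ) (hn : 1 ≤ n)
    (A B : Matrix (Fin n) (Fin n) ℂ) (hA : A ≠ 0) (hB : B ≠ 0) :
    ((A * Aᴴ).hadamard (B * Bᴴ) -
      ((max (A * Aᴴ).rank (B * Bᴴ).rank : ℕ) : ℂ)⁻¹ •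
        vecMulVec (A * Bᵀ).diag (star (A * Bᵀ).diag)).PosSemidef :=
  schur_product_lower_bound_max_rank_general n A B
end

section
/- Let n, k, a ≥ 1 be integers, let C ∈ ℂ^{k×n}, and let J ⊆ {1, …, n} be the set of indices of the nonzero columns of C. Let A, B ∈ ℂ^{n×a} be such that the principal submatrices (A A*)_{J×J} and (B B*)_{J×J} are nonzero. Then C (A A* ∘ B B*) C* ≥ γ · C d_{A Bᵀ} d_{A Bᵀ}* C* in the Loewner order, where γ = 1 / min(rank((A A*)_{J×J}), rank((B B*)_{J×J})) and d_{A Bᵀ} is the vector of diagonal entries of A Bᵀ. -/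
/-!
The columns of `C` outside `J` vanish, so `C M Cᴴ = C_J M_{J×J} C_Jᴴ`, and `rank (A Aᴴ)_{J×J}` is
the rank of the rows `A_J` of `A` indexed by `J`; it therefore suffices to show
`A Aᴴ ⊙ B Bᴴ ≥ (min (rank A) (rank B))⁻¹ • d dᴴ` with `d = diag (A Bᵀ)`.
For a vector `z` put `T = Bᵀ diag(z̄) A`. Then `zᴴ (A Aᴴ ⊙ B Bᴴ) z = ‖T‖_F²`,
`zᴴ d dᴴ z = |tr T|²` and `rank T ≤ min (rank A) (rank B)`, so the claim is
`|tr T|² ≤ rank T · ‖T‖_F²`. Conjugating `T` by an eigenbasis of `T Tᴴ` makes its rows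
orthogonal; only `rank T` of them are nonzero, and Cauchy–Schwarz over the corresponding
diagonal entries gives the bound.
-/

open Matrix ComplexOrder

open Finset

theorem norm_sum_sq_le_card_mul_sum_sq {ι E : Type*} [SeminormedAddCommGroup E] (s : Finset ι)
    (f : ι → E) : ‖∑ i ∈ s, f i‖ ^ 2 ≤ #s * ∑ i ∈ s, ‖f i‖ ^ 2 :=
  (pow_le_pow_left₀ (norm_nonneg _) (norm_sum_le _ _) 2).trans (sq_sum_le_card_mul_sum_sq ..)

namespace Matrix

variable {l m n a : Type*} [Fintype m] [Fintype n] [Fintype a] {𝕜 : Type*} [RCLike 𝕜]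

theorem mul_conjTranspose_self_apply_self (W : Matrix l n 𝕜) (i : l) :
    (W * Wᴴ) i i = ((∑ j, ‖W i j‖ ^ 2 : ℝ) : 𝕜) := by
  simp [mul_apply, RCLike.mul_conj]

theorem trace_mul_conjTranspose_self (W : Matrix m n 𝕜) :
    (W * Wᴴ).trace = ((∑ i, ∑ j, ‖W i j‖ ^ 2 : ℝ) : 𝕜) := by
  simp [trace, mul_conjTranspose_self_apply_self]

theorem norm_trace_sq_le_of_mul_conjTranspose_self_eq_diagonal [DecidableEq m]
    (W : Matrix m m 𝕜) (μ : m → ℝ) (hW : W * Wᴴ = diagonal (RCLike.ofReal ∘ μ)) :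
    ‖W.trace‖ ^ 2 ≤ #{i | μ i ≠ 0} * ∑ i, μ i := by
  have row_norm (i : m) : ∑ j, ‖W i j‖ ^ 2 = μ i := by
    have := (mul_conjTranspose_self_apply_self W i).symm.trans (congr_fun₂ hW i i)
    rw [diagonal_apply_eq] at this
    exact RCLike.ofReal_injective this
  have diag_le (i : m) : ‖W i i‖ ^ 2 ≤ μ i :=
    row_norm i ▸ single_le_sum (fun j _ => sq_nonneg ‖W i j‖) (mem_univ i)
  have diag_eq_zero (i : m) (hμ : μ i = 0) : W i i = 0 := by
    simpa [hμ] using diag_le i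
  have trace_eq : W.trace = ∑ i with μ i ≠ 0, W i i :=
    (sum_filter_of_ne fun i _ => mt (diag_eq_zero i)).symm
  calc ‖W.trace‖ ^ 2 ≤ #{i | μ i ≠ 0} * ∑ i with μ i ≠ 0, ‖W i i‖ ^ 2 :=
        trace_eq ▸ norm_sum_sq_le_card_mul_sum_sq _ _
    _ ≤ #{i | μ i ≠ 0} * ∑ i with μ i ≠ 0, μ i := by gcongr with i; exact diag_le i
    _ = #{i | μ i ≠ 0} * ∑ i, μ i := by rw [sum_filter_ne_zero]

theorem norm_trace_sq_le_rank_mul_s9 (T : Matrix m m 𝕜) :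
    ‖T.trace‖ ^ 2 ≤ T.rank * ∑ i, ∑ j, ‖T i j‖ ^ 2 := by
  classical
  have hH := isHermitian_mul_conjTranspose_self T
  set U : Matrix m m 𝕜 := (hH.eigenvectorUnitary : Matrix m m 𝕜)
  have hUU : U * star U = 1 := Unitary.mul_star_self_of_mem hH.eigenvectorUnitary.2
  have hW : (star U * T * U) * (star U * T * U)ᴴ =
      diagonal (RCLike.ofReal ∘ hH.eigenvalues) := by
    rw [← hH.conjStarAlgAut_star_eigenvectorUnitary, Unitary.conjStarAlgAut_star_apply]
    simp only [← star_eq_conjTranspose, star_mul, star_star, mul_assoc]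
    rw [← mul_assoc U, hUU, one_mul]
  have htrace : (star U * T * U).trace = T.trace := by
    rw [trace_mul_cycle, hUU, one_mul]
  have hcard : #{i | hH.eigenvalues i ≠ 0} = T.rank := by
    rw [← Fintype.card_subtype, ← hH.rank_eq_card_non_zero_eigs, rank_self_mul_conjTranspose]
  have hsum : ∑ i, hH.eigenvalues i = ∑ i, ∑ j, ‖T i j‖ ^ 2 := by
    have := hH.trace_eq_sum_eigenvalues.symm.trans (trace_mul_conjTranspose_self T)
    exact RCLike.ofReal_injective (K := 𝕜) (by rwa [RCLike.ofReal_sum])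
  simpa [htrace, hcard, hsum] using
    norm_trace_sq_le_of_mul_conjTranspose_self_eq_diagonal _ _ hW

section SchurProduct

variable {R : Type*} [CommSemiring R]

theorem trace_transpose_mul_diagonal_mul [DecidableEq n] (A B : Matrix n a R) (w : n → R) :
    (Bᵀ * diagonal w * A).trace = w ⬝ᵥ (A * Bᵀ).diag := by
  rw [Matrix.mul_assoc, trace_mul_comm, Matrix.mul_assoc, trace_mul_comm, dotProduct_comm]
  simp [trace, dotProduct]

variable [StarRing R]

theorem star_dotProduct_hadamard_mulVec_s9 [DecidableEq n] (A B : Matrix n a R) (z : n → R) :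
    star z ⬝ᵥ ((A * Aᴴ) ⊙ (B * Bᴴ) *ᵥ z) =
      (Bᵀ * diagonal (star z) * A * (Bᵀ * diagonal (star z) * A)ᴴ).trace := by
  rw [dotProduct_mulVec, dotProduct_vecMul_hadamard, Matrix.mul_assoc (Bᵀ * _),
    Matrix.mul_assoc Bᵀ, trace_mul_comm Bᵀ]
  simp only [conjTranspose_mul, transpose_mul, diagonal_conjTranspose, diagonal_transpose,
    star_star, conjTranspose_transpose_eq_transpose_conjTranspose, Matrix.mul_assoc]

end SchurProduct

theorem star_dotProduct_vecMulVec_mulVec (d z : n → 𝕜) :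
    star z ⬝ᵥ (vecMulVec d (star d) *ᵥ z) = ((‖star z ⬝ᵥ d‖ ^ 2 : ℝ) : 𝕜) := by
  rw [vecMulVec_mulVec, dotProduct_comm, star_dotProduct]
  simp [dotProduct_comm d, RCLike.conj_mul]

theorem posSemidef_hadamard_sub_inv_rank_smul_vecMulVec (A B : Matrix n a ℂ) :
    ((A * Aᴴ) ⊙ (B * Bᴴ) - ((min A.rank B.rank : ℕ) : ℂ)⁻¹ •
      vecMulVec (A * Bᵀ).diag (star (A * Bᵀ).diag)).PosSemidef := by
  classical
  set r := min A.rank B.rank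
  refine .of_dotProduct_mulVec_nonneg (.sub ?_ ?_) fun z => ?_
  · exact (isHermitian_mul_conjTranspose_self A).hadamard (isHermitian_mul_conjTranspose_self B)
  · exact (posSemidef_vecMulVec_self_star _).isHermitian.smul (by simp [IsSelfAdjoint])
  set T := Bᵀ * diagonal (star z) * A
  have hrank : T.rank ≤ r :=
    le_min (rank_mul_le_right _ _)
      ((rank_mul_le_left _ _).trans <| (rank_mul_le_left _ _).trans (rank_transpose B).le)
  have key : ‖T.trace‖ ^ 2 ≤ r * ∑ i, ∑ j, ‖T i j‖ ^ 2 :=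
    (norm_trace_sq_le_rank_mul_s9 T).trans (by gcongr)
  rw [sub_mulVec, dotProduct_sub, smul_mulVec, dotProduct_smul, star_dotProduct_hadamard_mulVec_s9,
    trace_mul_conjTranspose_self, star_dotProduct_vecMulVec_mulVec,
    ← trace_transpose_mul_diagonal_mul, smul_eq_mul, RCLike.ofReal_eq_complex_ofReal,
    ← Complex.ofReal_natCast, ← Complex.ofReal_inv, ← Complex.ofReal_mul, ← Complex.ofReal_sub,
    Complex.zero_le_real, sub_nonneg]
  exact inv_mul_le_of_le_mul₀ (Nat.cast_nonneg r) (by positivity) key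

section Compression

variable {α o : Type*} [NonUnitalSemiring α] {e : m → n}

theorem mul_eq_submatrix_mul_submatrix (C : Matrix l n α) (N : Matrix n o α)
    (he : Function.Injective e) (hC : ∀ i, ∀ j ∉ Set.range e, C i j = 0) :
    C * N = C.submatrix id e * N.submatrix e id := by
  ext i k
  exact (Fintype.sum_of_injective e he _ _ (fun j hj => by simp [hC i j hj]) fun _ => rfl).symm

theorem mul_mul_conjTranspose_eq_submatrix [StarRing α] (C : Matrix l n α) (M : Matrix n n α)
    (he : Function.Injective e) (hC : ∀ i, ∀ j ∉ Set.range e, C i j = 0) :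
    C * M * Cᴴ = C.submatrix id e * M.submatrix e e * (C.submatrix id e)ᴴ := by
  have right : M.submatrix e id * Cᴴ = M.submatrix e e * (C.submatrix id e)ᴴ := by
    simpa [conjTranspose_mul, conjTranspose_submatrix] using
      congr_arg conjTranspose (mul_eq_submatrix_mul_submatrix C (Mᴴ.submatrix id e) he hC)
  rw [Matrix.mul_assoc, mul_eq_submatrix_mul_submatrix C _ he hC, Matrix.mul_assoc]
  exact congr_arg _ right

end Compression

end Matrix

theorem compressed_schur_product_lower_bound_general
    (n k a : ℕ)
    (C : Matrix (Fin k) (Fin n) ℂ) (A B : Matrix (Fin n) (Fin a) ℂ)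
    (J : Finset (Fin n)) (hJ : ∀ j, j ∈ J ↔ ∃ i, C i j ≠ 0)
    (SA SB : Matrix J J ℂ)
    (hSA : SA = (A * Aᴴ).submatrix Subtype.val Subtype.val)
    (hSB : SB = (B * Bᴴ).submatrix Subtype.val Subtype.val) :
    (C * ((A * Aᴴ).hadamard (B * Bᴴ)) * Cᴴ -
      ((min SA.rank SB.rank : ℕ) : ℂ)⁻¹ •
        (C * vecMulVec (A * Bᵀ).diag (star (A * Bᵀ).diag) * Cᴴ)).PosSemidef := by
  set AJ := A.submatrix (Subtype.val : J → Fin n) id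
  set BJ := B.submatrix (Subtype.val : J → Fin n) id
  have hC : ∀ i, ∀ j ∉ Set.range (Subtype.val : J → Fin n), C i j = 0 := fun i j hj =>
    not_not.mp fun h => hj ⟨⟨j, (hJ j).2 ⟨i, h⟩⟩, rfl⟩
  have hrank : min SA.rank SB.rank = min AJ.rank BJ.rank := by
    rw [hSA, hSB, ← rank_self_mul_conjTranspose AJ, ← rank_self_mul_conjTranspose BJ]
    rfl
  rw [← Matrix.smul_mul, ← Matrix.mul_smul, ← Matrix.sub_mul, ← Matrix.mul_sub,
    mul_mul_conjTranspose_eq_submatrix _ _ Subtype.val_injective hC, hrank]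
  -- the `J × J` block is, definitionally, the same expression in `AJ` and `BJ`
  exact (posSemidef_hadamard_sub_inv_rank_smul_vecMulVec AJ BJ).mul_mul_conjTranspose_same _

theorem compressed_schur_product_lower_bound
    (n k a : ℕ) (hn : 1 ≤ n) (hk : 1 ≤ k) (ha : 1 ≤ a)
    (C : Matrix (Fin k) (Fin n) ℂ) (A B : Matrix (Fin n) (Fin a) ℂ)
    (J : Finset (Fin n)) (hJ : ∀ j, j ∈ J ↔ ∃ i, C i j ≠ 0)
    (SA SB : Matrix J J ℂ)
    (hSA : SA = (A * Aᴴ).submatrix Subtype.val Subtype.val)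
    (hSB : SB = (B * Bᴴ).submatrix Subtype.val Subtype.val)
    (hSA0 : SA ≠ 0) (hSB0 : SB ≠ 0) :
    (C * ((A * Aᴴ).hadamard (B * Bᴴ)) * Cᴴ -
      ((min SA.rank SB.rank : ℕ) : ℂ)⁻¹ •
        (C * vecMulVec (A * Bᵀ).diag (star (A * Bᵀ).diag) * Cᴴ)).PosSemidef :=
  compressed_schur_product_lower_bound_general n k a C A B J hJ SA SB hSA hSB
end
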